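/- For all words C, D ∈ W_ω, C ≾ CD; that is, appending any word on the right does not decrease a word in the preorder ≾. -/

import Mathlib

open scoped Classical

/-- Words: finite strings over the alphabet of natural numbers. -/
abbrev Word := List ℕ

/-- Lexicographic "not greater" comparison of finite sequences of words,
where entries are compared with the preorder `r`. -/
def LexLe (r : Word → Word → Prop) (xs ys : List Word) : Prop :=
  (xs.length ≤ ys.length ∧ ∀ i < xs.length,
      r (xs.getD i []) (ys.getD i []) ∧ r (ys.getD i []) (xs.getD i []))
  ∨ ∃ s, s < xs.length ∧ s < ys.length ∧
      (∀ i < s, r (xs.getD i []) (ys.getD i []) ∧ r (ys.getD i []) (xs.getD i [])) ∧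
      r (xs.getD s []) (ys.getD s []) ∧ ¬ r (ys.getD s []) (xs.getD s [])

/-- `M` is a lexicographically maximal subsequence of `xs` (w.r.t. entry preorder `r`). -/
def IsLexMax (r : Word → Word → Prop) (xs M : List Word) : Prop :=
  M.Sublist xs ∧ ∀ N : List Word, N.Sublist xs → LexLe r N M

/-- Fuelled version of the recursively defined preorder `≾` on words:
`Λ ≾ Λ`; and if `n` is the minimal symbol of `A ++ B`, split `A` and `B` into
blocks at `n` and compare the lexicographically maximal subsequences of blocks. -/
def leAux : ℕ → Word → Word → Prop
  | 0, A, B => A = [] ∧ B = []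
  | (fuel+1), A, B =>
      (A = [] ∧ B = []) ∨
      (∀ m, (A ++ B).min? = some m →
        ∀ MA MB : List Word, IsLexMax (leAux fuel) (A.splitOn m) MA →
          IsLexMax (leAux fuel) (B.splitOn m) MB →
          LexLe (leAux fuel) MA MB)

/-- The preorder `≾` on words (the fuel `|A|+|B|+1` suffices for the recursion). -/
def Wle (A B : Word) : Prop := leAux (A.length + B.length + 1) A B

/-- The equivalence `∼`: `A ≾ B` and `B ≾ A`. -/
def Wequiv (A B : Word) : Prop := Wle A B ∧ Wle B A

/-- The strict relation `≺`: `A ≾ B` and not `B ≾ A`. -/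
def Wlt (A B : Word) : Prop := Wle A B ∧ ¬ Wle B A

/-- Fuelled version of the normal form predicate `NF`. -/
def NFAux : ℕ → Word → Prop
  | 0, A => A = []
  | (fuel+1), A => A = [] ∨ ∀ m, A.min? = some m →
      (A.splitOn m).Chain' (fun x y => Wle y x) ∧ ∀ b ∈ A.splitOn m, NFAux fuel b

/-- `A` is in normal form. -/
def InNF (A : Word) : Prop := NFAux A.length A

/-- `◇ₖ A`: the normal form of the word `A` with symbol `k` appended. -/
noncomputable def diamond (k : ℕ) (A : Word) : Word :=
  if h : ∃ B, InNF B ∧ Wequiv B (A ++ [k]) then h.choose else []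

/-- Fuelled version of the ordinal value functions `o_n` on normal-form words in `S_n`. -/
noncomputable def oAux : ℕ → ℕ → Word → Ordinal
  | 0, _, _ => 0
  | (fuel+1), n, A =>
      if A.all (· = n) then (A.length : Ordinal)
      else ((A.splitOn n).map (fun b => Ordinal.omega0 ^ oAux fuel (n+1) b)).foldr (· + ·) 0

/-- The ordinal value function `o_n : NF ∩ S_n → Ordinals`. -/
noncomputable def oW (n : ℕ) (A : Word) : Ordinal :=
  oAux (A.foldr max 0 + A.length + 1) n A

/-- The towers of `ω`-exponentiations: `ω_0 = 1`, `ω_{n+1} = ω ^ ω_n`. -/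
noncomputable def omegaTower : ℕ → Ordinal
  | 0 => 1
  | (n+1) => Ordinal.omega0 ^ omegaTower n

/-- `ε₀`, the supremum of the `ω`-towers. -/
noncomputable def eps0 : Ordinal := ⨆ n : ℕ, omegaTower n

/-- The function `ψ` on ordinals: `ψ 0 = ω`, and for `α > 0` with Cantor normal form
`ω^{α_1}+⋯+ω^{α_n}` (non-increasing exponents), `ψ α = ω^{α_1}+⋯+ω^{α_{n-1}}+ω^{α_n+1}`. -/
noncomputable def psi (α : Ordinal) : Ordinal :=
  match (Ordinal.CNF Ordinal.omega0 α).getLast? with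
  | none => Ordinal.omega0
  | some p =>
      ((Ordinal.CNF Ordinal.omega0 α).dropLast).foldr
        (fun q r => Ordinal.omega0 ^ q.1 * q.2 + r) 0
      + (Ordinal.omega0 ^ p.1 * (p.2 - 1) + Ordinal.omega0 ^ (p.1 + 1))

/-- The standard fundamental sequences `α[n]` for limit ordinals below `ε₀`
(junk values elsewhere). -/
noncomputable def fundSeq (α : Ordinal) (n : ℕ) : Ordinal :=
  match (Ordinal.CNF Ordinal.omega0 α).getLast? with
  | none => 0
  | some p =>
    let pre := ((Ordinal.CNF Ordinal.omega0 α).dropLast).foldr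
        (fun q r => Ordinal.omega0 ^ q.1 * q.2 + r) 0
      + Ordinal.omega0 ^ p.1 * (p.2 - 1)
    if p.1 = 0 then 0
    else if h : ∃ e', p.1 = e' + 1 then
      pre + Ordinal.omega0 ^ h.choose * ((n : Ordinal) + 1)
    else if hlt : p.1 < α then pre + Ordinal.omega0 ^ (fundSeq p.1 n) else 0
termination_by α
decreasing_by exact hlt

/-- The relation `R`: `α R β` iff `β = α + 1`, or `β` is a limit and `α = β[n]` for some `n`. -/
def Rrel (α β : Ordinal) : Prop :=
  β = α + 1 ∨ (Order.IsSuccLimit β ∧ ∃ n : ℕ, α = fundSeq β n)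

/-!
The blocks of a word at a symbol `m` occurring in it are shorter than the word, and more generally
the distinct blocks of the words of a finite set `F` have smaller total length than `F`. By
induction on this total length, `≾` is a total preorder on every finite set of words: it is one on
the blocks, and comparing lexicographically maximal subsequences inherits totality and
transitivity from the entries. Blocks may be taken at one symbol `m` common to several words, even
one absent from some of them, which are then their own single block.

For `C ≾ CD`, take `m` least in `CD`. The blocks of `CD` are those of `C` with the last one, `ℓ`,
extended by the first block `w` of `D`, followed by the remaining blocks of `D`. Since `ℓ ≾ ℓw` by
induction, every subsequence of the blocks of `C` is lexicographically below a subsequence of the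
blocks of `CD` (replace a final `ℓ` by `ℓw`), hence below the maximal one.
-/

open List

theorem sum_length_splitOn_add_count (m : ℕ) (X : Word) :
    ((X.splitOn m).map length).sum + X.count m = X.length := by
  induction X with
  | nil => simp
  | cons c X ih =>
    rw [splitOn_cons_eq_if_modifyHead]
    by_cases hc : c = m
    · simp only [hc, beq_self_eq_true, if_true, map_cons, sum_cons, length_nil, count_cons_self,
        length_cons]
      omega
    · obtain ⟨b, bs, hb⟩ := exists_cons_of_ne_nil (splitOn_ne_nil m X)
      rw [hb] at ih
      simp only [beq_iff_eq, hc, if_false, hb, modifyHead_cons, map_cons, sum_cons, length_cons,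
        count_cons_of_ne hc] at ih ⊢
      omega

theorem sum_length_splitOn_le (m : ℕ) (X : Word) :
    ((X.splitOn m).map length).sum ≤ X.length :=
  (Nat.le_add_right _ _).trans (sum_length_splitOn_add_count m X).le

theorem sum_length_splitOn_lt {m : ℕ} {X : Word} (hm : m ∈ X) :
    ((X.splitOn m).map length).sum < X.length := by
  have := sum_length_splitOn_add_count m X
  have := count_pos_iff.2 hm
  omega

theorem length_lt_of_mem_splitOn {m : ℕ} {X u : Word} (hm : m ∈ X) (hu : u ∈ X.splitOn m) :
    u.length < X.length :=
  (le_sum_of_mem (mem_map_of_mem hu)).trans_lt (sum_length_splitOn_lt hm)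

theorem splitOn_append_of_eq {m : ℕ} {C D ℓ w : Word} {I T : List Word}
    (hC : C.splitOn m = I ++ [ℓ]) (hD : D.splitOn m = w :: T) :
    (C ++ D).splitOn m = I ++ (ℓ ++ w) :: T := by
  induction C generalizing I ℓ with
  | nil =>
    obtain ⟨rfl, ⟨⟩⟩ := append_inj' (hC.symm.trans (splitOn_nil m) : I ++ [ℓ] = [] ++ [[]]) rfl
    simpa using hD
  | cons c C ih =>
    obtain ⟨I₀, ℓ₀, hC₀⟩ := (eq_nil_or_concat (C.splitOn m)).resolve_left (splitOn_ne_nil m C)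
    rw [concat_eq_append] at hC₀
    obtain ⟨J, l, hJ, hJD⟩ : ∃ J l, (c :: C).splitOn m = J ++ [l] ∧
        (c :: C ++ D).splitOn m = J ++ (l ++ w) :: T := by
      rw [cons_append, splitOn_cons_eq_if_modifyHead, splitOn_cons_eq_if_modifyHead, hC₀, ih hC₀]
      by_cases hc : c = m
      · exact ⟨[] :: I₀, ℓ₀, by simp [hc]⟩
      · rcases I₀ with _ | ⟨b, I₀⟩
        · exact ⟨[], c :: ℓ₀, by simp [hc]⟩
        · exact ⟨(c :: b) :: I₀, ℓ₀, by simp [hc]⟩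
    obtain ⟨rfl, ⟨⟩⟩ := append_inj' (hC.symm.trans hJ) rfl
    exact hJD

theorem sum_toFinset_le_sum_map {α : Type*} [DecidableEq α] (l : List α) (f : α → ℕ) :
    ∑ x ∈ l.toFinset, f x ≤ (l.map f).sum := by
  rw [Finset.sum_list_map_count]
  exact Finset.sum_le_sum fun x hx =>
    le_smul_of_one_le_left (Nat.zero_le _) (count_pos_iff.2 (mem_toFinset.1 hx))

theorem sum_biUnion_le {ι α : Type*} [DecidableEq ι] [DecidableEq α] (s : Finset ι)
    (t : ι → Finset α) (f : α → ℕ) :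
    ∑ x ∈ s.biUnion t, f x ≤ ∑ i ∈ s, ∑ x ∈ t i, f x := by
  induction s using Finset.induction_on with
  | empty => simp
  | insert i s hi ih =>
    rw [Finset.biUnion_insert, Finset.sum_insert hi]
    calc ∑ x ∈ t i ∪ s.biUnion t, f x ≤ ∑ x ∈ t i, f x + ∑ x ∈ s.biUnion t, f x := by
          rw [← Finset.sum_union_inter]
          exact Nat.le_add_right _ _
      _ ≤ _ := Nat.add_le_add_left ih _

def weight (F : Finset Word) : ℕ := ∑ X ∈ F, X.length

def blocks (m : ℕ) (F : Finset Word) : Finset Word := F.biUnion fun X => (X.splitOn m).toFinset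

theorem splitOn_subset_blocks {m : ℕ} {F : Finset Word} {X : Word} (hX : X ∈ F) :
    ∀ u ∈ X.splitOn m, u ∈ (blocks m F : Set Word) := fun _ hu =>
  Finset.mem_biUnion.2 ⟨X, hX, mem_toFinset.2 hu⟩

theorem weight_blocks_lt {m : ℕ} {F : Finset Word} (hm : ∃ X ∈ F, m ∈ X) :
    weight (blocks m F) < weight F := by
  obtain ⟨X, hX, hmX⟩ := hm
  refine (sum_biUnion_le _ _ _).trans_lt (Finset.sum_lt_sum (fun Y _ => ?_) ⟨X, hX, ?_⟩)
  · exact (sum_toFinset_le_sum_map _ _).trans (sum_length_splitOn_le m Y)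
  · exact (sum_toFinset_le_sum_map _ _).trans_lt (sum_length_splitOn_lt hmX)

theorem weight_pair_le (A B : Word) : weight {A, B} ≤ A.length + B.length := by
  by_cases h : A = B
  · simp [weight, h]
  · simp [weight, Finset.sum_pair h]

structure IsTotalPreorderOn {α : Type*} (r : α → α → Prop) (s : Set α) : Prop where
  total : ∀ ⦃a⦄, a ∈ s → ∀ ⦃b⦄, b ∈ s → r a b ∨ r b a
  trans : ∀ ⦃a⦄, a ∈ s → ∀ ⦃b⦄, b ∈ s → ∀ ⦃c⦄, c ∈ s → r a b → r b c → r a c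

theorem IsTotalPreorderOn.refl {α : Type*} {r : α → α → Prop} {s : Set α}
    (h : IsTotalPreorderOn r s) {a : α} (ha : a ∈ s) : r a a :=
  (h.total ha ha).elim id id

section Lex

variable {r r' : Word → Word → Prop} {s : Set Word}

@[simp]
theorem lexLe_nil_left (ys : List Word) : LexLe r [] ys :=
  Or.inl ⟨Nat.zero_le _, by simp⟩

@[simp]
theorem not_lexLe_cons_nil (x : Word) (xs : List Word) : ¬ LexLe r (x :: xs) [] := by
  simp [LexLe]

@[simp]
theorem lexLe_cons_cons {x y : Word} {xs ys : List Word} :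
    LexLe r (x :: xs) (y :: ys) ↔ r x y ∧ (r y x → LexLe r xs ys) := by
  simp only [LexLe, length_cons, Nat.add_le_add_iff_right, Nat.forall_lt_succ_left,
    Nat.exists_lt_succ_left, Nat.add_lt_add_iff_right, getD_cons_zero, getD_cons_succ,
    Nat.not_lt_zero, IsEmpty.forall_iff, implies_true, Nat.zero_lt_succ, true_and]
  tauto

theorem lexLe_singleton {x y : Word} : LexLe r [x] [y] ↔ r x y := by
  simp

theorem lexLe_refl {xs : List Word} (h : ∀ x ∈ xs, r x x) : LexLe r xs xs := by
  induction xs with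
  | nil => exact lexLe_nil_left []
  | cons x xs ih => simpa [h x mem_cons_self] using ih fun y hy => h y (mem_cons_of_mem x hy)

theorem lexLe_append_left {P xs ys : List Word} (hP : ∀ x ∈ P, r x x) (h : LexLe r xs ys) :
    LexLe r (P ++ xs) (P ++ ys) := by
  induction P with
  | nil => exact h
  | cons x P ih => simpa [hP x mem_cons_self] using ih fun y hy => hP y (mem_cons_of_mem x hy)

theorem lexLe_congr (h : ∀ a ∈ s, ∀ b ∈ s, r a b ↔ r' a b) :
    ∀ {xs ys : List Word}, (∀ x ∈ xs, x ∈ s) → (∀ y ∈ ys, y ∈ s) →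
      (LexLe r xs ys ↔ LexLe r' xs ys)
  | [], _, _, _ => by simp
  | _ :: _, [], _, _ => by simp
  | x :: xs, y :: ys, hxs, hys => by
    have hx := hxs x mem_cons_self
    have hy := hys y mem_cons_self
    rw [lexLe_cons_cons, lexLe_cons_cons, h x hx y hy, h y hy x hx,
      lexLe_congr h (fun a ha => hxs a (mem_cons_of_mem x ha))
        fun b hb => hys b (mem_cons_of_mem y hb)]

theorem lexLe_trans
    (htrans : ∀ ⦃a⦄, a ∈ s → ∀ ⦃b⦄, b ∈ s → ∀ ⦃c⦄, c ∈ s → r a b → r b c → r a c) :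
    ∀ {xs ys zs : List Word}, (∀ x ∈ xs, x ∈ s) → (∀ y ∈ ys, y ∈ s) → (∀ z ∈ zs, z ∈ s) →
      LexLe r xs ys → LexLe r ys zs → LexLe r xs zs
  | [], _, _, _, _, _, _, _ => lexLe_nil_left _
  | _ :: _, [], _, _, _, _, hxy, _ => absurd hxy (not_lexLe_cons_nil _ _)
  | _ :: _, _ :: _, [], _, _, _, _, hyz => absurd hyz (not_lexLe_cons_nil _ _)
  | x :: xs, y :: ys, z :: zs, hxs, hys, hzs, hxy, hyz => by
    have hx := hxs x mem_cons_self
    have hy := hys y mem_cons_self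
    have hz := hzs z mem_cons_self
    rw [lexLe_cons_cons] at hxy hyz ⊢
    refine ⟨htrans hx hy hz hxy.1 hyz.1, fun hzx => ?_⟩
    exact lexLe_trans htrans (fun a ha => hxs a (mem_cons_of_mem x ha))
      (fun b hb => hys b (mem_cons_of_mem y hb)) (fun c hc => hzs c (mem_cons_of_mem z hc))
      (hxy.2 (htrans hy hz hx hyz.1 hzx)) (hyz.2 (htrans hz hx hy hzx hxy.1))

theorem lexLe_total (htotal : ∀ ⦃a⦄, a ∈ s → ∀ ⦃b⦄, b ∈ s → r a b ∨ r b a) :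
    ∀ {xs ys : List Word}, (∀ x ∈ xs, x ∈ s) → (∀ y ∈ ys, y ∈ s) →
      LexLe r xs ys ∨ LexLe r ys xs
  | [], _, _, _ => Or.inl (lexLe_nil_left _)
  | _ :: _, [], _, _ => Or.inr (lexLe_nil_left _)
  | x :: xs, y :: ys, hxs, hys => by
    simp only [lexLe_cons_cons]
    have htail := lexLe_total htotal (fun a ha => hxs a (mem_cons_of_mem x ha))
      (fun b hb => hys b (mem_cons_of_mem y hb))
    by_cases hxy : r x y <;> by_cases hyx : r y x
    · exact htail.imp (fun h => ⟨hxy, fun _ => h⟩) fun h => ⟨hyx, fun _ => h⟩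
    · exact Or.inl ⟨hxy, (absurd · hyx)⟩
    · exact Or.inr ⟨hyx, (absurd · hxy)⟩
    · exact absurd (htotal (hxs x mem_cons_self) (hys y mem_cons_self)) (by tauto)

theorem IsLexMax.forall_mem {xs M : List Word} (hM : IsLexMax r xs M) (hxs : ∀ x ∈ xs, x ∈ s) :
    ∀ x ∈ M, x ∈ s :=
  fun x hx => hxs x (hM.1.subset hx)

theorem isLexMax_congr (h : ∀ a ∈ s, ∀ b ∈ s, r a b ↔ r' a b) {xs M : List Word}
    (hxs : ∀ x ∈ xs, x ∈ s) : IsLexMax r xs M ↔ IsLexMax r' xs M := by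
  refine and_congr_right fun hM => forall₂_congr fun N hN => lexLe_congr h ?_ ?_
  · exact fun x hx => hxs x (hN.subset hx)
  · exact fun x hx => hxs x (hM.subset hx)

theorem isLexMax_singleton_iff {x : Word} {M : List Word} (hx : r x x) :
    IsLexMax r [x] M ↔ M = [x] := by
  refine ⟨fun hM => ?_, ?_⟩
  · rcases sublist_singleton.1 hM.1 with rfl | rfl
    · exact absurd (hM.2 [x] (Sublist.refl _)) (not_lexLe_cons_nil _ _)
    · rfl
  · rintro rfl
    refine ⟨Sublist.refl _, fun N hN => ?_⟩
    rcases sublist_singleton.1 hN with rfl | rfl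
    · exact lexLe_nil_left _
    · exact lexLe_singleton.2 hx

/-- A maximal subsequence of `x :: xs` is `x` followed by one of `xs` if `x` dominates `xs`, and
one of `xs` otherwise. -/
theorem exists_isLexMax (h : IsTotalPreorderOn r s) :
    ∀ {xs : List Word}, (∀ x ∈ xs, x ∈ s) → ∃ M, IsLexMax r xs M
  | [], _ => ⟨[], Sublist.refl _, fun N hN => by rw [sublist_nil.1 hN]; exact lexLe_nil_left _⟩
  | x :: xs, hxs => by
    have hx := hxs x mem_cons_self
    have hxs' : ∀ y ∈ xs, y ∈ s := fun y hy => hxs y (mem_cons_of_mem x hy)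
    obtain ⟨M, hMsub, hMmax⟩ := exists_isLexMax h hxs'
    by_cases hdom : ∀ y ∈ xs, r y x
    · refine ⟨x :: M, hMsub.cons_cons x, ?_⟩
      rintro (_ | ⟨y, N⟩) hN
      · exact lexLe_nil_left _
      rw [lexLe_cons_cons]
      rcases hN with _ | _
      · rename_i hN
        exact ⟨hdom y (hN.subset mem_cons_self),
          fun _ => hMmax N ((sublist_cons_self y N).trans hN)⟩
      · rename_i hN
        exact ⟨h.refl hx, fun _ => hMmax N hN⟩
    · obtain ⟨y, hy, hyx⟩ : ∃ y ∈ xs, ¬ r y x := by simpa using hdom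
      have hxy := (h.total (hxs' y hy) hx).resolve_left hyx
      refine ⟨M, hMsub.cons x, ?_⟩
      have hyM := hMmax [y] (singleton_sublist.2 hy)
      obtain ⟨z, M', rfl⟩ : ∃ z M', M = z :: M' := by
        rcases M with _ | ⟨z, M'⟩
        · exact absurd hyM (not_lexLe_cons_nil _ _)
        · exact ⟨z, M', rfl⟩
      have hz := hxs' z (hMsub.subset mem_cons_self)
      have hyz := (lexLe_cons_cons.1 hyM).1
      rintro (_ | ⟨u, N⟩) hN
      · exact lexLe_nil_left _
      rcases hN with _ | _
      · rename_i hN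
        exact hMmax _ hN
      · exact lexLe_cons_cons.2 ⟨h.trans hx (hxs' y hy) hz hxy hyz,
          fun hzx => absurd (h.trans (hxs' y hy) hz hx hyz hzx) hyx⟩

theorem lexLe_of_isLexMax
    (htrans : ∀ ⦃a⦄, a ∈ s → ∀ ⦃b⦄, b ∈ s → ∀ ⦃c⦄, c ∈ s → r a b → r b c → r a c)
    {xs ys M N : List Word} (hxs : ∀ x ∈ xs, x ∈ s) (hys : ∀ y ∈ ys, y ∈ s)
    (hM : IsLexMax r xs M) (hN : IsLexMax r ys N)
    (h : ∀ P, P <+ xs → ∃ Q, Q <+ ys ∧ LexLe r P Q) : LexLe r M N := by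
  obtain ⟨Q, hQ, hMQ⟩ := h M hM.1
  exact lexLe_trans htrans (hM.forall_mem hxs) (fun y hy => hys y (hQ.subset hy))
    (hN.forall_mem hys) hMQ (hN.2 Q hQ)

end Lex

def BlockLe (r : Word → Word → Prop) (m : ℕ) (A B : Word) : Prop :=
  ∀ MA MB, IsLexMax r (A.splitOn m) MA → IsLexMax r (B.splitOn m) MB → LexLe r MA MB

section Blocks

variable {r r' : Word → Word → Prop} {s : Set Word} {m : ℕ} {A B : Word}

theorem blockLe_congr (h : ∀ a ∈ s, ∀ b ∈ s, r a b ↔ r' a b) (hA : ∀ x ∈ A.splitOn m, x ∈ s)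
    (hB : ∀ x ∈ B.splitOn m, x ∈ s) : BlockLe r m A B ↔ BlockLe r' m A B := by
  refine forall₂_congr fun MA MB => ?_
  rw [isLexMax_congr h hA, isLexMax_congr h hB]
  exact imp_congr_right fun hMA => imp_congr_right fun hMB =>
    lexLe_congr h (hMA.forall_mem hA) (hMB.forall_mem hB)

theorem blockLe_congr_of_weight (hm : m ∈ A ++ B)
    (h : ∀ x y, weight {x, y} < weight {A, B} → (r x y ↔ r' x y)) :
    BlockLe r m A B ↔ BlockLe r' m A B := by
  have hAB : ∃ X ∈ ({A, B} : Finset Word), m ∈ X := by simpa [or_and_right, exists_or] using hm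
  refine blockLe_congr (s := blocks m {A, B}) (fun x hx y hy => h x y ?_)
    (splitOn_subset_blocks (by simp)) (splitOn_subset_blocks (by simp))
  exact (Finset.sum_le_sum_of_subset (Finset.insert_subset hx (Finset.singleton_subset_iff.2 hy))
    ).trans_lt (weight_blocks_lt hAB)

theorem blockLe_iff_lexLe
    (htrans : ∀ ⦃a⦄, a ∈ s → ∀ ⦃b⦄, b ∈ s → ∀ ⦃c⦄, c ∈ s → r a b → r b c → r a c)
    (hA : ∀ x ∈ A.splitOn m, x ∈ s) (hB : ∀ x ∈ B.splitOn m, x ∈ s) {MA MB : List Word}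
    (hMA : IsLexMax r (A.splitOn m) MA) (hMB : IsLexMax r (B.splitOn m) MB) :
    BlockLe r m A B ↔ LexLe r MA MB := by
  refine ⟨fun H => H MA MB hMA hMB, fun H MA' MB' hMA' hMB' => ?_⟩
  have hMA'MB : LexLe r MA' MB :=
    lexLe_trans htrans (hMA'.forall_mem hA) (hMA.forall_mem hA) (hMB.forall_mem hB)
      (hMA.2 MA' hMA'.1) H
  exact lexLe_trans htrans (hMA'.forall_mem hA) (hMB.forall_mem hB) (hMB'.forall_mem hB)
    hMA'MB (hMB'.2 MB hMB.1)

end Blocks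

theorem leAux_succ (f : ℕ) (A B : Word) : leAux (f + 1) A B ↔
    (A = [] ∧ B = []) ∨ ∀ m, (A ++ B).min? = some m → BlockLe (leAux f) m A B :=
  Iff.rfl

theorem leAux_congr_fuel : ∀ {f g : ℕ} {A B : Word}, weight {A, B} < f → weight {A, B} < g →
    (leAux f A B ↔ leAux g A B)
  | 0, _, _, _, hf, _ => absurd hf (Nat.not_lt_zero _)
  | _ + 1, 0, _, _, _, hg => absurd hg (Nat.not_lt_zero _)
  | _ + 1, _ + 1, _, _, hf, hg => by
    rw [leAux_succ, leAux_succ]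
    refine or_congr_right (forall_congr' fun m => imp_congr_right fun hm => ?_)
    exact blockLe_congr_of_weight (min?_eq_some_iff.1 hm).1 fun x y hxy =>
      leAux_congr_fuel (by omega) (by omega)

theorem wle_iff (A B : Word) : Wle A B ↔
    (A = [] ∧ B = []) ∨ ∀ m, (A ++ B).min? = some m → BlockLe Wle m A B := by
  rw [Wle, leAux_succ]
  refine or_congr_right (forall_congr' fun m => imp_congr_right fun hm => ?_)
  refine blockLe_congr_of_weight (min?_eq_some_iff.1 hm).1 fun x y hxy => ?_
  have := weight_pair_le A B
  have := weight_pair_le x y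
  exact leAux_congr_fuel (by omega) (by omega)

theorem wle_refl (A : Word) : Wle A A :=
  Or.inr fun _ _ _ _ hMA hMB => hMB.2 _ hMA.1

theorem wle_iff_lexLe {s : Set Word} (h : IsTotalPreorderOn Wle s) {m : ℕ} {A B : Word}
    (hmA : ∀ x ∈ A, m ≤ x) (hmB : ∀ x ∈ B, m ≤ x)
    (hA : ∀ x ∈ A.splitOn m, x ∈ s) (hB : ∀ x ∈ B.splitOn m, x ∈ s) {MA MB : List Word}
    (hMA : IsLexMax Wle (A.splitOn m) MA) (hMB : IsLexMax Wle (B.splitOn m) MB) :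
    Wle A B ↔ LexLe Wle MA MB := by
  by_cases hm : m ∈ A ++ B
  · have hmin : (A ++ B).min? = some m :=
      min?_eq_some_iff.2 ⟨hm, fun x hx => (mem_append.1 hx).elim (hmA x) (hmB x)⟩
    have hne : ¬ (A = [] ∧ B = []) := by
      rintro ⟨rfl, rfl⟩
      simp at hm
    rw [wle_iff, or_iff_right hne, ← blockLe_iff_lexLe h.trans hA hB hMA hMB]
    refine ⟨fun H => H m hmin, fun H m' hm' => ?_⟩
    obtain rfl := Option.some.inj (hm'.symm.trans hmin)
    exact H
  · rw [mem_append, not_or] at hm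
    rw [splitOn_eq_singleton hm.1, isLexMax_singleton_iff (wle_refl A)] at hMA
    rw [splitOn_eq_singleton hm.2, isLexMax_singleton_iff (wle_refl B)] at hMB
    rw [hMA, hMB, lexLe_singleton]

section OfBlocks

variable {F : Finset Word} {a b c : Word}

theorem wle_total_of_blocks
    (hF : ∀ m, (∃ X ∈ F, m ∈ X) → IsTotalPreorderOn Wle (blocks m F)) (ha : a ∈ F)
    (hb : b ∈ F) : Wle a b ∨ Wle b a := by
  rcases hmin : (a ++ b).min? with _ | m
  · obtain ⟨rfl, rfl⟩ := append_eq_nil_iff.1 (min?_eq_none_iff.1 hmin)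
    exact Or.inl (wle_refl [])
  obtain ⟨hm, hle⟩ := min?_eq_some_iff.1 hmin
  have hS := hF m ((mem_append.1 hm).elim (⟨a, ha, ·⟩) (⟨b, hb, ·⟩))
  have hsa := splitOn_subset_blocks (m := m) ha
  have hsb := splitOn_subset_blocks (m := m) hb
  obtain ⟨MA, hMA⟩ := exists_isLexMax hS hsa
  obtain ⟨MB, hMB⟩ := exists_isLexMax hS hsb
  have hma : ∀ x ∈ a, m ≤ x := fun x hx => hle x (mem_append_left b hx)
  have hmb : ∀ x ∈ b, m ≤ x := fun x hx => hle x (mem_append_right a hx)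
  rw [wle_iff_lexLe hS hma hmb hsa hsb hMA hMB, wle_iff_lexLe hS hmb hma hsb hsa hMB hMA]
  exact lexLe_total hS.total (hMA.forall_mem hsa) (hMB.forall_mem hsb)

theorem wle_trans_of_blocks
    (hF : ∀ m, (∃ X ∈ F, m ∈ X) → IsTotalPreorderOn Wle (blocks m F)) (ha : a ∈ F)
    (hb : b ∈ F) (hc : c ∈ F) (hab : Wle a b) (hbc : Wle b c) : Wle a c := by
  rcases hmin : (a ++ b ++ c).min? with _ | m
  · obtain ⟨rfl, -, rfl⟩ : a = [] ∧ b = [] ∧ c = [] := by simpa using hmin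
    exact wle_refl []
  obtain ⟨hm, hle⟩ := min?_eq_some_iff.1 hmin
  have hS := hF m <| by
    simp only [mem_append] at hm
    rcases hm with (hm | hm) | hm
    exacts [⟨a, ha, hm⟩, ⟨b, hb, hm⟩, ⟨c, hc, hm⟩]
  have hsa := splitOn_subset_blocks (m := m) ha
  have hsb := splitOn_subset_blocks (m := m) hb
  have hsc := splitOn_subset_blocks (m := m) hc
  obtain ⟨MA, hMA⟩ := exists_isLexMax hS hsa
  obtain ⟨MB, hMB⟩ := exists_isLexMax hS hsb
  obtain ⟨MC, hMC⟩ := exists_isLexMax hS hsc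
  have hma : ∀ x ∈ a, m ≤ x := fun x hx => hle x (by simp [hx])
  have hmb : ∀ x ∈ b, m ≤ x := fun x hx => hle x (by simp [hx])
  have hmc : ∀ x ∈ c, m ≤ x := fun x hx => hle x (by simp [hx])
  rw [wle_iff_lexLe hS hma hmb hsa hsb hMA hMB] at hab
  rw [wle_iff_lexLe hS hmb hmc hsb hsc hMB hMC] at hbc
  rw [wle_iff_lexLe hS hma hmc hsa hsc hMA hMC]
  exact lexLe_trans hS.trans (hMA.forall_mem hsa) (hMB.forall_mem hsb) (hMC.forall_mem hsc) hab hbc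

end OfBlocks

theorem isTotalPreorderOn_wle (F : Finset Word) : IsTotalPreorderOn Wle F := by
  induction hF : weight F using Nat.strong_induction_on generalizing F with
  | _ n ih =>
    subst hF
    have hblocks (m : ℕ) (hm : ∃ X ∈ F, m ∈ X) : IsTotalPreorderOn Wle (blocks m F) :=
      ih _ (weight_blocks_lt hm) _ rfl
    exact ⟨fun a ha b hb => wle_total_of_blocks hblocks ha hb,
      fun a ha b hb c hc => wle_trans_of_blocks hblocks ha hb hc⟩

theorem isTotalPreorderOn_wle_univ : IsTotalPreorderOn Wle Set.univ where
  total a _ b _ := (isTotalPreorderOn_wle {a, b}).total (by simp) (by simp)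
  trans a _ b _ c _ := (isTotalPreorderOn_wle {a, b, c}).trans (by simp) (by simp) (by simp)

theorem wle_append_of_splitOn_eq {m : ℕ} {C D ℓ w : Word} {I T : List Word}
    (hmC : ∀ x ∈ C, m ≤ x) (hmD : ∀ x ∈ D, m ≤ x) (hC : C.splitOn m = I ++ [ℓ])
    (hD : D.splitOn m = w :: T) (hℓ : Wle ℓ (ℓ ++ w)) : Wle C (C ++ D) := by
  have hS := isTotalPreorderOn_wle_univ
  have huniv : ∀ {xs : List Word}, ∀ x ∈ xs, x ∈ Set.univ := fun _ _ => trivial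
  have hmCD : ∀ x ∈ C ++ D, m ≤ x := fun x hx => (mem_append.1 hx).elim (hmC x) (hmD x)
  obtain ⟨MA, hMA⟩ := exists_isLexMax hS (huniv (xs := C.splitOn m))
  obtain ⟨MB, hMB⟩ := exists_isLexMax hS (huniv (xs := (C ++ D).splitOn m))
  rw [wle_iff_lexLe hS hmC hmCD huniv huniv hMA hMB]
  refine lexLe_of_isLexMax hS.trans huniv huniv hMA hMB fun P hP => ?_
  rw [hC, sublist_append_iff] at hP
  obtain ⟨P, Q, rfl, hP, hQ⟩ := hP
  rw [splitOn_append_of_eq hC hD]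
  rcases sublist_singleton.1 hQ with rfl | rfl
  · exact ⟨P, hP.trans (sublist_append_left _ _), by
      simpa using lexLe_refl fun _ _ => wle_refl _⟩
  · exact ⟨P ++ [ℓ ++ w], hP.append (by simp),
      lexLe_append_left (fun _ _ => wle_refl _) (lexLe_singleton.2 hℓ)⟩

theorem wle_append_right (C D : Word) : Wle C (C ++ D) := by
  induction hn : (C ++ D).length using Nat.strong_induction_on generalizing C D with
  | _ n ih =>
  rcases hmin : (C ++ D).min? with _ | m
  · obtain ⟨rfl, rfl⟩ := append_eq_nil_iff.1 (min?_eq_none_iff.1 hmin)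
    exact wle_refl []
  obtain ⟨hm, hle⟩ := min?_eq_some_iff.1 hmin
  obtain ⟨I, ℓ, hC⟩ := (eq_nil_or_concat (C.splitOn m)).resolve_left (splitOn_ne_nil m C)
  rw [concat_eq_append] at hC
  obtain ⟨w, T, hD⟩ := exists_cons_of_ne_nil (splitOn_ne_nil m D)
  have hℓ : Wle ℓ (ℓ ++ w) :=
    ih _ (hn ▸ length_lt_of_mem_splitOn hm (by simp [splitOn_append_of_eq hC hD])) ℓ w rfl
  exact wle_append_of_splitOn_eq (fun x hx => hle x (mem_append_left D hx))
    (fun x hx => hle x (mem_append_right C hx)) hC hD hℓ
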